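/- Let G be a simple connected graph and for each unordered pair of distinct vertices fix exactly one shortest path (a 'path fixing' F). Let H(G) be the auxiliary graph on E(G) where edges e1, e2 are adjacent iff they both separate a common vertex pair, and let G(A_F) be the graph on E(G) where e1, e2 are adjacent iff both lie on some common path of F. Then H(G) equals the intersection over all path fixings F of the graphs G(A_F). -/

import Mathlib

open SimpleGraph

variable {V : Type*} {C : Type*}

/-- A walk is a shortest path: it is a path whose length equals the distance
between its endpoints. -/
def IsShortestPath (G : SimpleGraph V) {u v : V} (p : G.Walk u v) : Prop :=
  p.IsPath ∧ p.length = G.dist u v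

/-- A walk is rainbow w.r.t. an edge coloring `f` if all of its edges receive
pairwise distinct colors. -/
def IsRainbow {G : SimpleGraph V} (f : Sym2 V → C) {u v : V} (p : G.Walk u v) : Prop :=
  (p.edges.map f).Nodup

/-- An edge `e` separates the vertices `u` and `v` if `e` lies on every
shortest `(u,v)`-path. -/
def EdgeSeparates (G : SimpleGraph V) (e : Sym2 V) (u v : V) : Prop :=
  ∀ p : G.Walk u v, IsShortestPath G p → e ∈ p.edges

/-- A vertex `w` separates the vertices `u` and `v` if `w` is an internal
vertex of every shortest `(u,v)`-path. -/
def VertexSeparates (G : SimpleGraph V) (w u v : V) : Prop :=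
  w ≠ u ∧ w ≠ v ∧ ∀ p : G.Walk u v, IsShortestPath G p → w ∈ p.support

/-- The auxiliary graph `H(G)`: vertices are the edges of `G`, and two edges
are adjacent iff some pair of distinct vertices of `G` is separated by both. -/
def auxGraph (G : SimpleGraph V) : SimpleGraph G.edgeSet where
  Adj e₁ e₂ := e₁ ≠ e₂ ∧
    ∃ u v : V, u ≠ v ∧ EdgeSeparates G e₁.1 u v ∧ EdgeSeparates G e₂.1 u v
  symm := by
    refine ⟨?_⟩
    rintro e₁ e₂ ⟨hne, u, v, huv, h1, h2⟩
    exact ⟨hne.symm, u, v, huv, h2, h1⟩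
  loopless := by refine ⟨?_⟩; rintro e ⟨hne, -⟩; exact hne rfl

/-- An edge coloring strongly rainbow connects `G` if every pair of distinct
vertices is joined by a rainbow shortest path. -/
def StronglyRainbowConnects (G : SimpleGraph V) (f : Sym2 V → C) : Prop :=
  ∀ u v : V, u ≠ v → ∃ p : G.Walk u v, IsShortestPath G p ∧ IsRainbow f p

/-- An edge coloring rainbow connects `G` if every pair of distinct vertices
is joined by a rainbow path. -/
def RainbowConnects (G : SimpleGraph V) (f : Sym2 V → C) : Prop :=
  ∀ u v : V, u ≠ v → ∃ p : G.Walk u v, p.IsPath ∧ IsRainbow f p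

/-- The strong rainbow connection number of `G`. -/
noncomputable def src (G : SimpleGraph V) : ℕ :=
  sInf {k : ℕ | ∃ f : Sym2 V → Fin k, StronglyRainbowConnects G f}

/-- The rainbow connection number of `G`. -/
noncomputable def rc (G : SimpleGraph V) : ℕ :=
  sInf {k : ℕ | ∃ f : Sym2 V → Fin k, RainbowConnects G f}

/-- A path fixing selects one shortest `(u,v)`-path for every ordered pair of
distinct vertices. -/
def PathFixing {V : Type*} (G : SimpleGraph V) : Type _ :=
  ∀ u v : V, u ≠ v → {p : G.Walk u v // IsShortestPath G p}

/-- The graph `G(A_F)` on the edges of `G` associated with a path fixing `F`: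
two edges are adjacent iff both lie on some common fixed path of `F`. -/
def fixingGraph {V : Type*} (G : SimpleGraph V) (F : PathFixing G) :
    SimpleGraph G.edgeSet where
  Adj e₁ e₂ := e₁ ≠ e₂ ∧ ∃ (u v : V) (h : u ≠ v),
    (e₁ : Sym2 V) ∈ (F u v h).1.edges ∧ (e₂ : Sym2 V) ∈ (F u v h).1.edges
  symm := by
    refine ⟨?_⟩
    rintro e₁ e₂ ⟨hne, x, y, h, h1, h2⟩
    exact ⟨hne.symm, x, y, h, h2, h1⟩
  loopless := by refine ⟨?_⟩; rintro e ⟨hne, -⟩; exact hne rfl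

/-!
If every path fixing puts `e₁` and `e₂` on a common fixed path, some pair is separated by
both: otherwise choose, for each pair, a shortest path avoiding one of the two edges, and
this path fixing puts them on no common path. The other inclusion is immediate, since fixed
paths are shortest paths.
-/

section

variable {G : SimpleGraph V}

lemma auxGraph_le_fixingGraph (F : PathFixing G) : auxGraph G ≤ fixingGraph G F := by
  rintro e₁ e₂ ⟨hne, u, v, huv, h₁, h₂⟩
  exact ⟨hne, u, v, huv, h₁ _ (F u v huv).2, h₂ _ (F u v huv).2⟩

lemma exists_isShortestPath_not_mem_edges_or_not_mem_edges {e₁ e₂ : Sym2 V} {u v : V}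
    (h : ¬(EdgeSeparates G e₁ u v ∧ EdgeSeparates G e₂ u v)) :
    ∃ p : G.Walk u v, IsShortestPath G p ∧ (e₁ ∉ p.edges ∨ e₂ ∉ p.edges) := by
  simp only [EdgeSeparates, not_and_or, not_forall] at h
  rcases h with ⟨p, hp, h₁⟩ | ⟨p, hp, h₂⟩
  · exact ⟨p, hp, .inl h₁⟩
  · exact ⟨p, hp, .inr h₂⟩

lemma exists_pathFixing_not_fixingGraph_adj {e₁ e₂ : G.edgeSet}
    (h : ¬∃ u v : V, u ≠ v ∧ EdgeSeparates G e₁ u v ∧ EdgeSeparates G e₂ u v) :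
    ∃ F : PathFixing G, ¬(fixingGraph G F).Adj e₁ e₂ := by
  choose p hp hmiss using fun u v huv =>
    exists_isShortestPath_not_mem_edges_or_not_mem_edges fun hsep => h ⟨u, v, huv, hsep⟩
  refine ⟨fun u v huv => ⟨p u v huv, hp u v huv⟩, ?_⟩
  rintro ⟨-, u, v, huv, h₁, h₂⟩
  exact (hmiss u v huv).elim (· h₁) (· h₂)

lemma iInf_fixingGraph_le_auxGraph : ⨅ F : PathFixing G, fixingGraph G F ≤ auxGraph G := by
  intro e₁ e₂ hadj
  obtain ⟨hall, hne⟩ := iInf_adj.mp hadj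
  refine ⟨hne, ?_⟩
  by_contra hsep
  obtain ⟨F, hF⟩ := exists_pathFixing_not_fixingGraph_adj hsep
  exact hF (hall F)

end

theorem stmt17_general {V : Type*} (G : SimpleGraph V) :
    auxGraph G = ⨅ F : PathFixing G, fixingGraph G F :=
  le_antisymm (le_iInf auxGraph_le_fixingGraph) iInf_fixingGraph_le_auxGraph

/-- The auxiliary graph `H(G)` equals the intersection, over all path fixings
`F`, of the graphs `G(A_F)`. -/
theorem stmt17 {V : Type*} (G : SimpleGraph V) (hG : G.Connected) :
    auxGraph G = ⨅ F : PathFixing G, fixingGraph G F :=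
  stmt17_general G
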